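/- Mid-scenario upper bound (Theorem on the mid-point initial solution): assume p̲_{ij} > 0 for all machine–job pairs, and let α = max_{i,j} (p̄_{ij} − p̲_{ij}) / p̲_{ij}. Let s½ be the mid-scenario with processing times p½_{ij} = (p̄_{ij} + p̲_{ij})/2, and let π* be a schedule that is optimal under s½ (with the given setup times s), i.e., F(π*, s½) = F*(s½). Then the maximum regret of π* over the scenario set S satisfies R_max(π*) ≤ (2α / (2 + α)) · F*(s½). -/
import Mathlib


open Finset

noncomputable section

/-- Total setup time of machine `i` processing the job list `l`:
the initial setup for the first job plus the setup times over consecutive pairs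
(`0` if the list is empty). -/
def totalSetup {M N : Type*} (setup0 : M → N → ℝ) (setup : M → N → N → ℝ)
    (i : M) (l : List N) : ℝ :=
  match l with
  | [] => 0
  | k :: rest => setup0 i k + (List.zipWith (setup i) (k :: rest) rest).sum

/-- A schedule assigns to each machine a finite sequence of jobs without repetition,
such that every job appears in exactly one machine's sequence. -/
structure Schedule (M N : Type*) where
  seq : M → List N
  nodup : ∀ i, (seq i).Nodup
  cover : ∀ j : N, ∃! i : M, j ∈ seq i

variable {M N : Type*}

/-- Completion time of machine `i` in schedule `sc` under scenario `p`. -/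
def complTime (setup0 : M → N → ℝ) (setup : M → N → N → ℝ)
    (sc : Schedule M N) (p : M → N → ℝ) (i : M) : ℝ :=
  totalSetup setup0 setup i (sc.seq i) + ((sc.seq i).map (p i)).sum

/-- Makespan of schedule `sc` under scenario `p`: max machine completion time. -/
def makespan [Fintype M] [Nonempty M] (setup0 : M → N → ℝ) (setup : M → N → N → ℝ)
    (sc : Schedule M N) (p : M → N → ℝ) : ℝ :=
  Finset.univ.sup' Finset.univ_nonempty (complTime setup0 setup sc p)

/-- Optimal makespan under scenario `p`: minimum over all schedules. -/
def optMakespan [Fintype M] [Nonempty M] (setup0 : M → N → ℝ) (setup : M → N → N → ℝ)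
    (p : M → N → ℝ) : ℝ :=
  ⨅ sc : Schedule M N, makespan setup0 setup sc p

/-- The scenario set `S`: all processing-time matrices between the bounds. -/
def ScenSet (lb ub : M → N → ℝ) : Set (M → N → ℝ) :=
  {p | ∀ i j, lb i j ≤ p i j ∧ p i j ≤ ub i j}

/-- Regret of schedule `sc` under scenario `p`. -/
def regret [Fintype M] [Nonempty M] (setup0 : M → N → ℝ) (setup : M → N → N → ℝ)
    (sc : Schedule M N) (p : M → N → ℝ) : ℝ :=
  makespan setup0 setup sc p - optMakespan setup0 setup p

/-- Maximum regret of schedule `sc` over the scenario set. -/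
def maxRegret [Fintype M] [Nonempty M] (setup0 : M → N → ℝ) (setup : M → N → N → ℝ)
    (lb ub : M → N → ℝ) (sc : Schedule M N) : ℝ :=
  ⨆ p : ScenSet lb ub, regret setup0 setup sc p.1

/-- The extreme scenario of schedule `sc` for machine `f`: upper bounds on jobs
assigned to machine `f`, lower bounds elsewhere. -/
def extremeScen [DecidableEq N] (lb ub : M → N → ℝ) (sc : Schedule M N) (f : M) :
    M → N → ℝ :=
  fun i j => if j ∈ sc.seq f then ub i j else lb i j

/-- The maximum relative deviation `α = max_{i,j} (p̄_{ij} − p̲_{ij}) / p̲_{ij}`. -/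
def maxRelDev [Fintype M] [Nonempty M] [Fintype N] [Nonempty N]
    (lb ub : M → N → ℝ) : ℝ :=
  Finset.univ.sup' Finset.univ_nonempty
    (fun x : M × N => (ub x.1 x.2 - lb x.1 x.2) / lb x.1 x.2)


lemma zipWith_sum_nonneg {N : Type*} (f : N → N → ℝ) (h : ∀ a b, 0 ≤ f a b) :
    ∀ l1 l2 : List N, 0 ≤ (List.zipWith f l1 l2).sum
  | [], _ => by simp
  | _ :: _, [] => by simp
  | a :: t1, b :: t2 => by
      simp only [List.zipWith_cons_cons, List.sum_cons]
      exact add_nonneg (h a b) (zipWith_sum_nonneg f h t1 t2)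

lemma totalSetup_nonneg {M N : Type*} (setup0 : M → N → ℝ) (setup : M → N → N → ℝ)
    (hs0 : ∀ i k, 0 ≤ setup0 i k) (hs : ∀ i j k, 0 ≤ setup i j k) (i : M) (l : List N) :
    0 ≤ totalSetup setup0 setup i l := by
  cases l with
  | nil => simp [totalSetup]
  | cons k rest =>
      show 0 ≤ setup0 i k + (List.zipWith (setup i) (k :: rest) rest).sum
      exact add_nonneg (hs0 i k) (zipWith_sum_nonneg _ (hs i) _ _)

lemma sum_map_mul {N : Type*} (l : List N) (f : N → ℝ) (c : ℝ) :
    (l.map (fun x => c * f x)).sum = c * (l.map f).sum := by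
  induction l with
  | nil => simp
  | cons a t ih => simp [ih]; ring

lemma complTime_nonneg {M N : Type*} (setup0 : M → N → ℝ) (setup : M → N → N → ℝ)
    (hs0 : ∀ i k, 0 ≤ setup0 i k) (hs : ∀ i j k, 0 ≤ setup i j k)
    (sc : Schedule M N) (q : M → N → ℝ) (hq : ∀ i j, 0 ≤ q i j) (i : M) :
    0 ≤ complTime setup0 setup sc q i := by
  refine add_nonneg (totalSetup_nonneg setup0 setup hs0 hs i _) (List.sum_nonneg ?_)
  intro x hx
  obtain ⟨j, -, rfl⟩ := List.mem_map.mp hx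
  exact hq i j

lemma complTime_le_mul {M N : Type*} (setup0 : M → N → ℝ) (setup : M → N → N → ℝ)
    (hs0 : ∀ i k, 0 ≤ setup0 i k) (hs : ∀ i j k, 0 ≤ setup i j k)
    (sc : Schedule M N) (p q : M → N → ℝ) (c : ℝ) (hc : 1 ≤ c)
    (h : ∀ i j, p i j ≤ c * q i j) (i : M) :
    complTime setup0 setup sc p i ≤ c * complTime setup0 setup sc q i := by
  have hT := totalSetup_nonneg setup0 setup hs0 hs i (sc.seq i)
  have hsum : ((sc.seq i).map (p i)).sum ≤ c * ((sc.seq i).map (q i)).sum := by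
    rw [← sum_map_mul]
    exact List.sum_le_sum (fun j _ => h i j)
  unfold complTime
  nlinarith [mul_nonneg (sub_nonneg.mpr hc) hT]

lemma mul_le_complTime {M N : Type*} (setup0 : M → N → ℝ) (setup : M → N → N → ℝ)
    (hs0 : ∀ i k, 0 ≤ setup0 i k) (hs : ∀ i j k, 0 ≤ setup i j k)
    (sc : Schedule M N) (p q : M → N → ℝ) (c : ℝ) (hc0 : 0 ≤ c) (hc1 : c ≤ 1)
    (h : ∀ i j, c * q i j ≤ p i j) (i : M) :
    c * complTime setup0 setup sc q i ≤ complTime setup0 setup sc p i := by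
  have hT := totalSetup_nonneg setup0 setup hs0 hs i (sc.seq i)
  have hsum : c * ((sc.seq i).map (q i)).sum ≤ ((sc.seq i).map (p i)).sum := by
    rw [← sum_map_mul]
    exact List.sum_le_sum (fun j _ => h i j)
  unfold complTime
  nlinarith [mul_nonneg (sub_nonneg.mpr hc1) hT]

lemma makespan_le_mul {M N : Type*} [Fintype M] [Nonempty M]
    (setup0 : M → N → ℝ) (setup : M → N → N → ℝ)
    (hs0 : ∀ i k, 0 ≤ setup0 i k) (hs : ∀ i j k, 0 ≤ setup i j k)
    (sc : Schedule M N) (p q : M → N → ℝ) (c : ℝ) (hc : 1 ≤ c)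
    (h : ∀ i j, p i j ≤ c * q i j) :
    makespan setup0 setup sc p ≤ c * makespan setup0 setup sc q := by
  apply Finset.sup'_le
  intro i _
  calc complTime setup0 setup sc p i ≤ c * complTime setup0 setup sc q i :=
        complTime_le_mul setup0 setup hs0 hs sc p q c hc h i
    _ ≤ c * makespan setup0 setup sc q :=
        mul_le_mul_of_nonneg_left (Finset.le_sup' _ (Finset.mem_univ i))
          (le_trans zero_le_one hc)

lemma mul_le_makespan {M N : Type*} [Fintype M] [Nonempty M]
    (setup0 : M → N → ℝ) (setup : M → N → N → ℝ)
    (hs0 : ∀ i k, 0 ≤ setup0 i k) (hs : ∀ i j k, 0 ≤ setup i j k)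
    (sc : Schedule M N) (p q : M → N → ℝ) (c : ℝ) (hc0 : 0 ≤ c) (hc1 : c ≤ 1)
    (h : ∀ i j, c * q i j ≤ p i j) :
    c * makespan setup0 setup sc q ≤ makespan setup0 setup sc p := by
  obtain ⟨i, -, hi⟩ :=
    Finset.exists_mem_eq_sup' Finset.univ_nonempty (complTime setup0 setup sc q)
  calc c * makespan setup0 setup sc q = c * complTime setup0 setup sc q i := by
        rw [makespan, hi]
    _ ≤ complTime setup0 setup sc p i :=
        mul_le_complTime setup0 setup hs0 hs sc p q c hc0 hc1 h i
    _ ≤ makespan setup0 setup sc p := Finset.le_sup' _ (Finset.mem_univ i)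

lemma nonempty_schedule {M N : Type*} [Fintype N] [Nonempty M] :
    Nonempty (Schedule M N) := by
  classical
  obtain ⟨i0⟩ := (inferInstance : Nonempty M)
  refine ⟨⟨fun i => if i = i0 then Finset.univ.toList else [], ?_, ?_⟩⟩
  · intro i
    by_cases h : i = i0 <;> simp [h, Finset.nodup_toList]
  · intro j
    refine ⟨i0, by simp, ?_⟩
    intro i hi
    by_contra hne
    simp [hne] at hi

/-- Mid-scenario upper bound. Assume all lower bounds are positive and
let `α` be the maximum relative deviation. If `scStar` is an optimal schedule under
the mid-scenario `s½` with processing times `(p̄ + p̲)/2`, then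
`R_max(scStar) ≤ (2α / (2 + α)) · F*(s½)`. -/
theorem mid_scenario_upper_bound
    [Fintype M] [Nonempty M] [Fintype N] [Nonempty N]
    (setup0 : M → N → ℝ) (setup : M → N → N → ℝ) (lb ub : M → N → ℝ)
    (hs0 : ∀ i k, 0 ≤ setup0 i k) (hs : ∀ i j k, 0 ≤ setup i j k)
    (hlb : ∀ i j, 0 < lb i j) (hlu : ∀ i j, lb i j ≤ ub i j)
    (scStar : Schedule M N)
    (hopt : makespan setup0 setup scStar (fun i j => (ub i j + lb i j) / 2) =
        optMakespan setup0 setup (fun i j => (ub i j + lb i j) / 2)) :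
    maxRegret setup0 setup lb ub scStar ≤
      (2 * maxRelDev lb ub / (2 + maxRelDev lb ub)) *
        optMakespan setup0 setup (fun i j => (ub i j + lb i j) / 2) := by
  classical
  have hSched : Nonempty (Schedule M N) := nonempty_schedule
  set α := maxRelDev lb ub with hαdef
  set pm : M → N → ℝ := fun i j => (ub i j + lb i j) / 2 with hpmdef
  obtain ⟨x0⟩ := (inferInstance : Nonempty (M × N))
  have hα0 : 0 ≤ α := by
    have h1 : (ub x0.1 x0.2 - lb x0.1 x0.2) / lb x0.1 x0.2 ≤ α := by
      rw [hαdef, maxRelDev]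
      exact Finset.le_sup' (fun x : M × N => (ub x.1 x.2 - lb x.1 x.2) / lb x.1 x.2)
        (Finset.mem_univ x0)
    have h2 := div_nonneg (sub_nonneg.mpr (hlu x0.1 x0.2)) (hlb x0.1 x0.2).le
    linarith
  have hub : ∀ i j, ub i j ≤ (1 + α) * lb i j := by
    intro i j
    have h1 : (ub i j - lb i j) / lb i j ≤ α := by
      rw [hαdef, maxRelDev]
      exact Finset.le_sup' (fun x : M × N => (ub x.1 x.2 - lb x.1 x.2) / lb x.1 x.2)
        (Finset.mem_univ (i, j))
    have h2 : ub i j - lb i j ≤ α * lb i j := (div_le_iff₀ (hlb i j)).mp h1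
    nlinarith [hlb i j]
  have h2α : (0:ℝ) < 2 + α := by linarith
  set cp : ℝ := 2 * (1 + α) / (2 + α) with hcpdef
  set cm : ℝ := 2 / (2 + α) with hcmdef
  have hcp1 : 1 ≤ cp := by rw [hcpdef, le_div_iff₀ h2α]; linarith
  have hcm0 : 0 ≤ cm := by positivity
  have hcm1 : cm ≤ 1 := by rw [hcmdef, div_le_one h2α]; linarith
  have hpm0 : ∀ i j, 0 ≤ pm i j := by
    intro i j
    have := hlb i j
    have := hlu i j
    simp only [hpmdef]
    linarith
  have hup : ∀ i j, ub i j ≤ cp * pm i j := by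
    intro i j
    have h1 := hub i j
    have h2 := hlb i j
    rw [show cp * pm i j = (2 * (1 + α)) * ((ub i j + lb i j) / 2) / (2 + α) by
      rw [hcpdef]; ring, le_div_iff₀ h2α]
    nlinarith
  have hlow : ∀ i j, cm * pm i j ≤ lb i j := by
    intro i j
    have h1 := hub i j
    rw [show cm * pm i j = 2 * ((ub i j + lb i j) / 2) / (2 + α) by
      rw [hcmdef]; ring, div_le_iff₀ h2α]
    nlinarith
  set Fs := optMakespan setup0 setup pm with hFsdef
  have hbdd : BddBelow (Set.range fun sc : Schedule M N => makespan setup0 setup sc pm) := by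
    refine ⟨0, ?_⟩
    rintro _ ⟨sc, rfl⟩
    exact le_trans (complTime_nonneg setup0 setup hs0 hs sc pm hpm0 (Classical.arbitrary M))
      (Finset.le_sup' _ (Finset.mem_univ _))
  have key : ∀ p ∈ ScenSet lb ub,
      regret setup0 setup scStar p ≤ (2 * α / (2 + α)) * Fs := by
    intro p hp
    have hup' : makespan setup0 setup scStar p ≤ cp * Fs := by
      have h := makespan_le_mul setup0 setup hs0 hs scStar p pm cp hcp1
        (fun i j => le_trans (hp i j).2 (hup i j))
      rw [hopt] at h
      exact h
    have hlow' : cm * Fs ≤ optMakespan setup0 setup p := by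
      apply le_ciInf
      intro sc
      calc cm * Fs ≤ cm * makespan setup0 setup sc pm :=
            mul_le_mul_of_nonneg_left (ciInf_le hbdd sc) hcm0
        _ ≤ makespan setup0 setup sc p :=
            mul_le_makespan setup0 setup hs0 hs sc p pm cm hcm0 hcm1
              (fun i j => le_trans (hlow i j) (hp i j).1)
    have hFs0 : 0 ≤ Fs := by
      rw [hFsdef, optMakespan]
      apply le_ciInf
      intro sc
      exact le_trans (complTime_nonneg setup0 setup hs0 hs sc pm hpm0 (Classical.arbitrary M))
        (Finset.le_sup' _ (Finset.mem_univ _))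
    have hcpcm : cp - cm = 2 * α / (2 + α) := by
      rw [hcpdef, hcmdef]
      field_simp
      ring
    have heq : cp * Fs - cm * Fs = (2 * α / (2 + α)) * Fs := by
      rw [← sub_mul, hcpcm]
    rw [regret]
    linarith
  have hne : Nonempty (ScenSet lb ub) := ⟨⟨lb, fun i j => ⟨le_refl _, hlu i j⟩⟩⟩
  rw [maxRegret]
  exact ciSup_le (fun p => key p.1 p.2)

end
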